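/- For all impartial games G, H, Ĥ₁, Ĥ₂, if 𝒢(Ĥ₁) = 𝒢(Ĥ₂), then 𝒢(G :_{Ĥ₁} H) = 𝒢(G :_{Ĥ₂} H). -/

import Mathlib

/-- mex (minimum excludant) of a set of naturals. -/
noncomputable def mexS (A : Set ℕ) : ℕ := sInf {n | n ∉ A}

/-- The colon operation on sets of naturals:
`A : B = A ∪ {x_i | i ∈ B}` where `x_0 < x_1 < ⋯` enumerates `ℕ \ A`. -/
noncomputable def colonS (A B : Set ℕ) : Set ℕ :=
  A ∪ (fun i => Nat.nth (fun n => n ∉ A) i) '' B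

/-- Elementwise addition of a natural number: `A + b = {a + b | a ∈ A}`. -/
def addS (A : Set ℕ) (b : ℕ) : Set ℕ := (· + b) '' A

/-- Elementwise bitwise XOR: `A ⊕ x = {a XOR x | a ∈ A}`. -/
def xorS (A : Set ℕ) (x : ℕ) : Set ℕ := (fun a => a ^^^ x) '' A

/-- `Gn n` is the set of (hereditarily finite) games born by day `n`:
`Gn 0 = {∅}`, `Gn (n+1) = 2^(Gn n)`. -/
noncomputable def Gn : ℕ → ZFSet
  | 0 => {∅}
  | n + 1 => ZFSet.powerset (Gn n)

/-- An impartial game: a hereditarily finite set. -/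
def IsGame (G : ZFSet) : Prop := ∃ n, G ∈ Gn n

/-- Birthday: least `n` with `G ∈ Gn n`. -/
noncomputable def birthday (G : ZFSet) : ℕ := sInf {n | G ∈ Gn n}

/-- `g` is the Grundy-number function: `g G = mex {g G' | G' ∈ G}`. -/
def IsGrundy (g : ZFSet → ℕ) : Prop :=
  ∀ G : ZFSet, g G = mexS {n | ∃ x ∈ G, g x = n}

/-- The variation set of `G` with respect to a Grundy function `g`:
the set of Grundy values of the options of `G`. -/
def vset (g : ZFSet → ℕ) (G : ZFSet) : Set ℕ := {n | ∃ x ∈ G, g x = n}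

/-- `f` is the ordinal sum with substitution: `f G H Ĥ = G :_{Ĥ} H`,
defined by `G :_{Ĥ} H = {G' :_{Ĥ} Ĥ | G' ∈ G} ∪ {G :_{Ĥ} H' | H' ∈ H}`. -/
def IsOSub (f : ZFSet → ZFSet → ZFSet → ZFSet) : Prop :=
  ∀ G H Hh x : ZFSet,
    x ∈ f G H Hh ↔ (∃ G' ∈ G, x = f G' Hh Hh) ∨ (∃ H' ∈ H, x = f G H' Hh)

/-- `s` is the ordinal sum: `G : H = {G' | G' ∈ G} ∪ {G : H' | H' ∈ H}`. -/
def IsOSum (s : ZFSet → ZFSet → ZFSet) : Prop :=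
  ∀ G H x : ZFSet, x ∈ s G H ↔ x ∈ G ∨ (∃ H' ∈ H, x = s G H')

/-- `d` is the disjunctive sum: `G + H = {G' + H | G' ∈ G} ∪ {G + H' | H' ∈ H}`. -/
def IsDSum (d : ZFSet → ZFSet → ZFSet) : Prop :=
  ∀ G H x : ZFSet, x ∈ d G H ↔ (∃ G' ∈ G, x = d G' H) ∨ (∃ H' ∈ H, x = d G H')

/-- The nimber `*n = {*m | m < n}`. -/
noncomputable def nim : ℕ → ZFSet
  | 0 => ∅
  | n + 1 => insert (nim n) (nim n)

/-- Left-associated chain of ordinal sums with substitution: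
`chain f X Xh s k = X s :_{Xh (s+1)} X (s+1) :_{Xh (s+2)} ⋯ :_{Xh (s+k)} X (s+k)`. -/
noncomputable def chain (f : ZFSet → ZFSet → ZFSet → ZFSet)
    (X Xh : ℕ → ZFSet) (s : ℕ) : ℕ → ZFSet
  | 0 => X s
  | k + 1 => f (chain f X Xh s k) (X (s + k + 1)) (Xh (s + k + 1))


theorem ZFSet.mem_toSet (a u : ZFSet) : a ∈ u.toSet ↔ a ∈ u := Iff.rfl

theorem ZFSet.toSet_subset_iff {x y : ZFSet} : x.toSet ⊆ y.toSet ↔ x ⊆ y := Iff.rfl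

theorem ZFSet.toSet_injective : Function.Injective ZFSet.toSet := SetLike.coe_injective

theorem ZFSet.toSet_empty : ZFSet.toSet ∅ = ∅ := by ext; simp [ZFSet.mem_toSet]

noncomputable def phi (h : ℕ) : ZFSet → ℕ :=
  ZFSet.mem_wf.fix fun G ih =>
    Nat.nth (fun n => ∀ x : ZFSet, ∀ hx : x ∈ G, ih x hx ≠ n) h

def Sset (h : ℕ) (G : ZFSet) : Set ℕ := {n | ∃ x ∈ G, phi h x = n}

lemma phi_eq (h : ℕ) (G : ZFSet) :
    phi h G = Nat.nth (fun n => n ∉ Sset h G) h := by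
  have h1 : phi h G = Nat.nth (fun n => ∀ x : ZFSet, x ∈ G → phi h x ≠ n) h := by
    conv_lhs => rw [phi]
    rw [WellFounded.fix_eq]
    rfl
  rw [h1]
  congr 1
  funext n
  simp only [Sset, Set.mem_setOf_eq, not_exists, eq_iff_iff]
  tauto

lemma Gn_toSet_finite : ∀ n, (Gn n).toSet.Finite := by
  intro n
  induction n with
  | zero =>
    have : (Gn 0).toSet ⊆ {∅} := by
      intro x hx
      simp only [ZFSet.mem_toSet, Gn, ZFSet.mem_singleton] at hx
      simp [hx]
    exact Set.Finite.subset (Set.finite_singleton _) this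
  | succ n ih =>
    have h2 : (Gn (n+1)).toSet ⊆ ZFSet.toSet ⁻¹' {b | b ⊆ (Gn n).toSet} := by
      intro x hx
      simp only [ZFSet.mem_toSet, Gn, ZFSet.mem_powerset] at hx
      simp only [Set.mem_preimage, Set.mem_setOf_eq]
      rw [ZFSet.toSet_subset_iff]
      exact hx
    exact Set.Finite.subset ((ih.finite_subsets).preimage
      (Set.injOn_of_injective ZFSet.toSet_injective)) h2

lemma mem_Gn_zero {G : ZFSet} (h : G ∈ Gn 0) : G = ∅ := by
  simpa [Gn] using h

lemma mem_Gn_succ {G x : ZFSet} {n : ℕ} (h : G ∈ Gn (n+1)) (hx : x ∈ G) : x ∈ Gn n := by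
  rw [Gn, ZFSet.mem_powerset] at h
  exact h hx

lemma toSet_finite_of_mem_Gn {G : ZFSet} {n : ℕ} (h : G ∈ Gn n) : G.toSet.Finite := by
  cases n with
  | zero => rw [mem_Gn_zero h]; simp [ZFSet.toSet_empty]
  | succ n =>
    rw [Gn, ZFSet.mem_powerset] at h
    exact (Gn_toSet_finite n).subset (ZFSet.toSet_subset_iff.mpr h)

lemma mexS_not_mem {A : Set ℕ} (hA : A.Finite) : mexS A ∉ A := by
  have hne : {n | n ∉ A}.Nonempty := by
    simpa [Set.compl_def] using hA.infinite_compl.nonempty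
  exact Nat.sInf_mem hne

lemma mem_of_lt_mexS {A : Set ℕ} {m : ℕ} (hm : m < mexS A) : m ∈ A := by
  by_contra hc
  have : sInf {n | n ∉ A} ≤ m := Nat.sInf_le hc
  have : mexS A ≤ m := this
  omega

lemma mex_union (A B : Set ℕ) (hA : A.Finite) (k : ℕ)
    (hB1 : ∀ j, j < k → j ∈ B) (hB2 : k ∉ B) :
    mexS (A ∪ (fun j => Nat.nth (fun n => n ∉ A) j) '' B)
      = Nat.nth (fun n => n ∉ A) k := by
  classical
  set p := fun n => n ∉ A with hp'
  have hp : (setOf p).Infinite := by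
    exact hA.infinite_compl
  have hmem : Nat.nth p k ∉ A ∪ (fun j => Nat.nth p j) '' B := by
    rintro (h1 | ⟨j, hj, hjk⟩)
    · exact (Nat.nth_mem_of_infinite hp k) h1
    · have hjeq : j = k := by
        rcases lt_trichotomy j k with h | h | h
        · exact absurd ((Nat.nth_lt_nth hp).mpr h) (by simp only at hjk; rw [hjk]; omega)
        · exact h
        · exact absurd ((Nat.nth_lt_nth hp).mpr h) (by simp only at hjk; rw [hjk]; omega)
      exact hB2 (hjeq ▸ hj)
  have hlt : ∀ m, m < Nat.nth p k → m ∈ A ∪ (fun j => Nat.nth p j) '' B := by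
    intro m hm
    by_cases hmA : m ∈ A
    · exact Or.inl hmA
    · right
      have hpm : p m := hmA
      have hnc : Nat.nth p (Nat.count p m) = m := Nat.nth_count hpm
      have hcount : Nat.count p m < k := by
        have := (Nat.nth_lt_nth hp (k := Nat.count p m) (n := k)).mp (by rw [hnc]; exact hm)
        exact this
      exact ⟨Nat.count p m, hB1 _ hcount, hnc⟩
  apply le_antisymm
  · exact Nat.sInf_le hmem
  · by_contra hc
    push_neg at hc
    have hne : {n | n ∉ A ∪ (fun j => Nat.nth p j) '' B}.Nonempty := ⟨_, hmem⟩
    have := Nat.sInf_mem hne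
    exact this (hlt _ hc)

lemma vset_eq_image (g : ZFSet → ℕ) (G : ZFSet) :
    {n | ∃ x ∈ G, g x = n} = g '' G.toSet := by
  ext n; simp [ZFSet.mem_toSet]

lemma Sset_finite {h : ℕ} {G : ZFSet} {n : ℕ} (hG : G ∈ Gn n) : (Sset h G).Finite := by
  have : Sset h G = phi h '' G.toSet := vset_eq_image (phi h) G
  rw [this]
  exact (toSet_finite_of_mem_Gn hG).image _

lemma main_lemma (f : ZFSet → ZFSet → ZFSet → ZFSet) (hf : IsOSub f)
    (g : ZFSet → ℕ) (hg : IsGrundy g) :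
    ∀ a : ℕ, ∀ G : ZFSet, G ∈ Gn a → ∀ b : ℕ, ∀ H : ZFSet, H ∈ Gn b →
      ∀ Hh : ZFSet, IsGame Hh →
      g (f G H Hh) = Nat.nth (fun n => n ∉ Sset (g Hh) G) (g H) := by
  intro a
  induction a using Nat.strong_induction_on with
  | _ a iha =>
  intro G hGa
  -- values of type-1 options
  have hopt : ∀ G' ∈ G, ∀ Hh' : ZFSet, IsGame Hh' →
      g (f G' Hh' Hh') = phi (g Hh') G' := by
    intro G' hG' Hh' hHh'
    obtain ⟨c, hc⟩ := hHh'
    cases a with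
    | zero => rw [mem_Gn_zero hGa] at hG'; exact absurd hG' (ZFSet.notMem_empty G')
    | succ n =>
      rw [phi_eq]
      exact iha n (Nat.lt_succ_self n) G' (mem_Gn_succ hGa hG') c Hh' hc Hh' ⟨c, hc⟩
  intro b
  induction b using Nat.strong_induction_on with
  | _ b ihb =>
  intro H hHb Hh hHh
  -- values of type-2 options
  have hHopt : ∀ H' ∈ H, g (f G H' Hh) = Nat.nth (fun n => n ∉ Sset (g Hh) G) (g H') := by
    intro H' hH'
    cases b with
    | zero => rw [mem_Gn_zero hHb] at hH'; exact absurd hH' (ZFSet.notMem_empty H')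
    | succ m => exact ihb m (Nat.lt_succ_self m) H' (mem_Gn_succ hHb hH') Hh hHh
  -- the set of option values
  have key : {n | ∃ x ∈ f G H Hh, g x = n}
      = Sset (g Hh) G ∪ (fun j => Nat.nth (fun n => n ∉ Sset (g Hh) G) j) ''
          {n | ∃ x ∈ H, g x = n} := by
    ext n
    simp only [Set.mem_setOf_eq, Set.mem_union, Set.mem_image]
    constructor
    · rintro ⟨x, hx, rfl⟩
      rcases (hf G H Hh x).mp hx with ⟨G', hG', rfl⟩ | ⟨H', hH', rfl⟩
      · left
        exact ⟨G', hG', (hopt G' hG' Hh hHh).symm⟩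
      · right
        exact ⟨g H', ⟨H', hH', rfl⟩, (hHopt H' hH').symm⟩
    · rintro (⟨x, hx, rfl⟩ | ⟨j, ⟨H', hH', rfl⟩, rfl⟩)
      · exact ⟨f x Hh Hh, (hf G H Hh _).mpr (Or.inl ⟨x, hx, rfl⟩), hopt x hx Hh hHh⟩
      · exact ⟨f G H' Hh, (hf G H Hh _).mpr (Or.inr ⟨H', hH', rfl⟩), hHopt H' hH'⟩
  rw [hg (f G H Hh), key]
  apply mex_union _ _ (Sset_finite hGa)
  · -- ∀ j < g H, j ∈ vset g H
    intro j hj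
    have hfin : {n | ∃ x ∈ H, g x = n}.Finite := by
      rw [vset_eq_image]; exact (toSet_finite_of_mem_Gn hHb).image _
    have : j < mexS {n | ∃ x ∈ H, g x = n} := by rw [← hg H]; exact hj
    exact mem_of_lt_mexS this
  · -- g H ∉ vset g H
    have hfin : {n | ∃ x ∈ H, g x = n}.Finite := by
      rw [vset_eq_image]; exact (toSet_finite_of_mem_Gn hHb).image _
    rw [hg H]
    exact mexS_not_mem hfin

theorem stmt12 (f : ZFSet → ZFSet → ZFSet → ZFSet) (hf : IsOSub f)
    (g : ZFSet → ℕ) (hg : IsGrundy g)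
    (G H Hh1 Hh2 : ZFSet) (hG : IsGame G) (hH : IsGame H) (hHh1 : IsGame Hh1)
    (hHh2 : IsGame Hh2) (h : g Hh1 = g Hh2) :
    g (f G H Hh1) = g (f G H Hh2) := by
  obtain ⟨a, hGa⟩ := hG
  obtain ⟨b, hHb⟩ := hH
  rw [main_lemma f hf g hg a G hGa b H hHb Hh1 hHh1,
      main_lemma f hf g hg a G hGa b H hHb Hh2 hHh2, h]
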